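/- For every real η > 0 and every natural number T ≥ 0, the two-sided tail sum ∑_{t ∈ ℤ, |t| > T} η · e^{−√(|t| η / 2)} converges and is bounded above by 8 · (1 + √(T η / 2)) · e^{−√(T η / 2)}. -/

import Mathlib

open Real

/-!
Put `a = √(nη/2)` and `b = √((n+1)η/2)`, so that `η = 2(b² - a²)`. Since `(1 + u) e^{-u}` has
derivative `-u e^{-u}`, `η e^{-b} ≤ ∫_a^b 4u e^{-u} du = F n - F (n+1)` with
`F n = 4 (1 + √(nη/2)) e^{-√(nη/2)}`. Telescoping bounds the one-sided tail `∑_{n > T}` by `F T`,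
and the two sides `t > T`, `t < -T` of the two-sided tail give the factor `2`.
-/

theorem hasSum_nat_add_iff_of_eq_zero {M : Type*} [AddCommMonoid M] [TopologicalSpace M]
    {f : ℕ → M} {a : M} (k : ℕ) (hf : ∀ n < k, f n = 0) :
    HasSum (fun n => f (n + k)) a ↔ HasSum f a := by
  refine (add_left_injective k).hasSum_iff fun n hn => hf n ?_
  by_contra! hkn
  exact hn ⟨n - k, Nat.sub_add_cancel hkn⟩

theorem hasSum_subtype_lt_abs {M : Type*} [AddCommMonoid M] [TopologicalSpace M] [ContinuousAdd M]
    {f : ℕ → M} {a : M} (T : ℕ) (h : HasSum (fun n => f (n + T + 1)) a) :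
    HasSum (fun t : {t : ℤ // (T : ℤ) < |t|} => f (t : ℤ).natAbs) (a + a) := by
  set g := {t : ℤ | (T : ℤ) < |t|}.indicator fun t => f t.natAbs
  have hg : ∀ n : ℕ, g n = if T < n then f n else 0 := fun n => by
    simp [g, Set.indicator_apply]
  have hg_neg : ∀ t, g (-t) = g t := fun t => by
    simp [g, Set.indicator_apply]
  have hpos : HasSum (fun n : ℕ => g n) a := by
    rw [← hasSum_nat_add_iff_of_eq_zero (T + 1) fun n hn => by
      rw [hg, if_neg (by omega)]]
    convert h using 2 with n
    rw [hg, if_pos (by omega), add_assoc]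
  have hneg : HasSum (fun n : ℕ => g (-(n + 1))) a := by
    rw [← hasSum_nat_add_iff_of_eq_zero 1 fun n hn => by
      rw [Nat.lt_one_iff.1 hn, hg, if_neg T.not_lt_zero]] at hpos
    convert hpos using 2 with n
    rw [hg_neg, Nat.cast_succ]
  exact hasSum_subtype_iff_indicator.2 (hpos.of_nat_of_neg_add_one hneg)

theorem two_mul_sq_sub_sq_mul_exp_neg_le {a b : ℝ} (ha : 0 ≤ a) (hab : a ≤ b) :
    2 * (b ^ 2 - a ^ 2) * exp (-b) ≤ 4 * (1 + a) * exp (-a) - 4 * (1 + b) * exp (-b) := by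
  have hexp : 1 + (b - a) + (b - a) ^ 2 / 2 ≤ exp (b - a) :=
    quadratic_le_exp_of_nonneg (sub_nonneg.2 hab)
  have key : (b ^ 2 - a ^ 2) / 2 + (1 + b) ≤ (1 + a) * exp (b - a) := by
    nlinarith [mul_le_mul_of_nonneg_left hexp (by linarith : 0 ≤ 1 + a),
      mul_nonneg ha (sq_nonneg (b - a))]
  have hsplit : exp (-a) = exp (b - a) * exp (-b) := by rw [← exp_add]; ring_nf
  rw [hsplit]
  nlinarith [mul_le_mul_of_nonneg_right key (exp_pos (-b)).le]

theorem summable_and_tsum_le_of_le_sub_succ {f F : ℕ → ℝ} (hf : ∀ n, 0 ≤ f n)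
    (hF : ∀ n, 0 ≤ F n) (h : ∀ n, f n ≤ F n - F (n + 1)) :
    Summable f ∧ ∑' n, f n ≤ F 0 := by
  have partial_le : ∀ N, ∑ i ∈ Finset.range N, f i ≤ F 0 := fun N =>
    calc ∑ i ∈ Finset.range N, f i
        ≤ ∑ i ∈ Finset.range N, (F i - F (i + 1)) := Finset.sum_le_sum fun i _ => h i
      _ = F 0 - F N := Finset.sum_range_sub' F N
      _ ≤ F 0 := sub_le_self _ (hF N)
  exact ⟨summable_of_sum_range_le hf partial_le, Real.tsum_le_of_sum_range_le hf partial_le⟩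

theorem stmt_10 (η : ℝ) (T : ℕ) (hη : 0 < η) :
    Summable (fun t : {t : ℤ // (T : ℤ) < |t|} =>
      η * Real.exp (-Real.sqrt (|(t : ℤ)| * η / 2))) ∧
    ∑' t : {t : ℤ // (T : ℤ) < |t|}, η * Real.exp (-Real.sqrt (|(t : ℤ)| * η / 2)) ≤
      8 * (1 + Real.sqrt (T * η / 2)) * Real.exp (-Real.sqrt (T * η / 2)) := by
  set F : ℕ → ℝ := fun n => 4 * (1 + √(n * η / 2)) * exp (-√(n * η / 2)) with hF
  have step (n : ℕ) : η * exp (-√((n + 1 : ℕ) * η / 2)) ≤ F n - F (n + 1) := by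
    have h := two_mul_sq_sub_sq_mul_exp_neg_le (sqrt_nonneg (n * η / 2))
      (sqrt_le_sqrt (by gcongr; simp) : √(n * η / 2) ≤ √((n + 1 : ℕ) * η / 2))
    rw [sq_sqrt (by positivity), sq_sqrt (by positivity)] at h
    convert h using 2
    push_cast; ring
  obtain ⟨hsum, hle⟩ := summable_and_tsum_le_of_le_sub_succ
    (f := fun n => η * exp (-√((n + T + 1 : ℕ) * η / 2))) (F := fun n => F (n + T))
    (fun n => by positivity) (fun n => by positivity) fun n => by
      rw [add_right_comm n 1 T]; exact step (n + T)
  have hZ := hasSum_subtype_lt_abs (f := fun n : ℕ => η * exp (-√(n * η / 2))) T hsum.hasSum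
  simp only [Nat.cast_natAbs] at hZ
  refine ⟨hZ.summable, hZ.tsum_eq ▸ ?_⟩
  simp only [hF, zero_add] at hle
  linarith
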